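/- (Singular value thresholding solves the nuclear norm proximal problem) Let τ > 0 and let Y ∈ ℝ^{m×n} have a singular value decomposition Y = U·Σ·Vᵀ with U ∈ ℝ^{m×m}, V ∈ ℝ^{n×n} orthogonal matrices and Σ ∈ ℝ^{m×n} diagonal with nonnegative entries. Define D_τ(Y) = U·Σ_τ·Vᵀ, where Σ_τ is obtained from Σ by replacing each diagonal entry σ with max(σ − τ, 0). Then for every X ∈ ℝ^{m×n}: τ‖D_τ(Y)‖_* + (1/2)‖D_τ(Y) − Y‖_F² ≤ τ‖X‖_* + (1/2)‖X − Y‖_F². -/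

import Mathlib

/-!
With the trace inner product `⟪A, B⟫ = tr (Aᵀ B)`, put `G = Y - D = U (Σ - Σ_τ) Vᵀ`. Its
diagonal entries `min(σ, τ)` lie in `[0, τ]`, so `‖G v‖ ≤ τ ‖v‖`. Pairing `G` with `X` along an
orthonormal eigenbasis `wⱼ` of `XᵀX`, where `‖X wⱼ‖ = √λⱼ`, and applying Cauchy–Schwarz to each
pair gives `⟪G, X⟫ ≤ τ ‖X‖_*`, while `⟪G, D⟫ = τ ∑ max(σ - τ, 0) = τ ‖D‖_*`. Expanding
`‖X - Y‖² = ‖X - D‖² + 2 ⟪X - D, D - Y⟫ + ‖D - Y‖²` and using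
`⟪X - D, D - Y⟫ = ⟪G, D⟫ - ⟪G, X⟫ ≥ τ ‖D‖_* - τ ‖X‖_*` proves the inequality.
-/

open Matrix

/-- The `i`-th singular value (0-indexed, in decreasing order) of a real `m × n` matrix `X`:
the nonnegative square roots of the eigenvalues of `Xᵀ * X`, sorted decreasingly,
with value `0` for indices `i ≥ n`. -/
noncomputable def sval {m n : ℕ} (X : Matrix (Fin m) (Fin n) ℝ) (i : ℕ) : ℝ :=
  if h : i < n then
    Real.sqrt ((show (Xᵀ * X).IsHermitian by simpa using Matrix.isHermitian_conjTranspose_mul_self X).eigenvalues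
      (Tuple.sort (fun j => -((show (Xᵀ * X).IsHermitian by simpa using Matrix.isHermitian_conjTranspose_mul_self X).eigenvalues j)) ⟨i, h⟩))
  else 0

/-- The nuclear norm of a real `m × n` matrix: the sum of its singular values. -/
noncomputable def nuclearNorm {m n : ℕ} (X : Matrix (Fin m) (Fin n) ℝ) : ℝ :=
  ∑ i ∈ Finset.range (min m n), sval X i

/-- The squared Frobenius norm of a real matrix. -/
def frobSq {m n : ℕ} (M : Matrix (Fin m) (Fin n) ℝ) : ℝ :=
  ∑ i : Fin m, ∑ j : Fin n, (M i j) ^ 2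

section RectDiag

variable {R : Type*} {m n : ℕ}

def IsRectDiag [Zero R] (S : Matrix (Fin m) (Fin n) R) : Prop :=
  ∀ (i : Fin m) (j : Fin n), (i : ℕ) ≠ j → S i j = 0

def rectDiag [Zero R] (S : Matrix (Fin m) (Fin n) R) (j : Fin n) : R :=
  if h : (j : ℕ) < m then S ⟨j, h⟩ j else 0

lemma rectDiag_sub [AddGroup R] (S T : Matrix (Fin m) (Fin n) R) :
    rectDiag (S - T) = rectDiag S - rectDiag T := by
  ext j
  simp only [rectDiag, Pi.sub_apply]
  split_ifs <;> simp

lemma IsRectDiag.sub [AddGroup R] {S T : Matrix (Fin m) (Fin n) R} (hS : IsRectDiag S)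
    (hT : IsRectDiag T) : IsRectDiag (S - T) := fun i j hij => by
  simp [hS i j hij, hT i j hij]

lemma IsRectDiag.transpose_mul [NonUnitalNonAssocSemiring R] {S T : Matrix (Fin m) (Fin n) R}
    (hS : IsRectDiag S) (hT : IsRectDiag T) :
    Sᵀ * T = diagonal (rectDiag S * rectDiag T) := by
  ext j k
  rw [mul_apply]
  by_cases hjk : j = k
  · subst hjk
    rw [diagonal_apply_eq, Pi.mul_apply, rectDiag, rectDiag]
    split_ifs with hj
    · refine (Finset.sum_eq_single ⟨j, hj⟩ (fun i _ hi => ?_) (by simp)).trans rfl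
      rw [transpose_apply, hS i j fun h => hi (Fin.ext h), zero_mul]
    · refine (Finset.sum_eq_zero fun i _ => ?_).trans (zero_mul 0).symm
      rw [transpose_apply, hS i j (by omega), zero_mul]
  · rw [diagonal_apply_ne _ hjk]
    refine Finset.sum_eq_zero fun i _ => ?_
    by_cases hij : (i : ℕ) = j
    · rw [transpose_apply, hT i k fun h => hjk (Fin.ext (hij ▸ h)), mul_zero]
    · rw [transpose_apply, hS i j hij, zero_mul]

end RectDiag

section Frobenius

variable {m n : ℕ}

lemma trace_transpose_mul_comm {ι κ : Type*} [Fintype ι] [Fintype κ] (A B : Matrix ι κ ℝ) :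
    (Aᵀ * B).trace = (Bᵀ * A).trace := by
  rw [← trace_transpose, transpose_mul, transpose_transpose]

lemma frobSq_eq_trace (A : Matrix (Fin m) (Fin n) ℝ) : frobSq A = (Aᵀ * A).trace := by
  simp only [frobSq, trace, diag, mul_apply, transpose_apply, sq]
  exact Finset.sum_comm

lemma frobSq_nonneg (A : Matrix (Fin m) (Fin n) ℝ) : 0 ≤ frobSq A :=
  Finset.sum_nonneg fun _ _ => Finset.sum_nonneg fun _ _ => sq_nonneg _

lemma frobSq_add (A B : Matrix (Fin m) (Fin n) ℝ) :
    frobSq (A + B) = frobSq A + 2 * (Aᵀ * B).trace + frobSq B := by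
  simp only [frobSq_eq_trace, transpose_add, Matrix.add_mul, Matrix.mul_add, trace_add,
    trace_transpose_mul_comm B A]
  ring

lemma dotProduct_sq_le_dotProduct_self_mul {ι : Type*} [Fintype ι] (v w : ι → ℝ) :
    (v ⬝ᵥ w) ^ 2 ≤ (v ⬝ᵥ v) * (w ⬝ᵥ w) := by
  simpa only [dotProduct, sq] using Finset.sum_mul_sq_le_sq_mul_sq Finset.univ v w

lemma mulVec_dotProduct_mulVec {ι κ : Type*} [Fintype ι] [Fintype κ] (M N : Matrix ι κ ℝ)
    (v : κ → ℝ) : (M *ᵥ v) ⬝ᵥ (N *ᵥ v) = v ⬝ᵥ ((Mᵀ * N) *ᵥ v) := by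
  rw [← mulVec_mulVec, dotProduct_mulVec v, vecMul_transpose]

lemma trace_eq_sum_dotProduct_mulVec {κ : Type*} [Fintype κ] [DecidableEq κ] (A W : Matrix κ κ ℝ)
    (hW : W * Wᵀ = 1) : A.trace = ∑ j, Wᵀ j ⬝ᵥ (A *ᵥ Wᵀ j) := by
  calc A.trace = (Wᵀ * (A * W)).trace := by
        rw [trace_mul_comm, Matrix.mul_assoc, hW, Matrix.mul_one]
    _ = _ := Finset.sum_congr rfl fun j _ => by
        simp [mul_apply, mulVec, dotProduct, Finset.mul_sum, mul_left_comm]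

end Frobenius

section Spectral

variable {m n : ℕ}

lemma isHermitian_transpose_mul_self {ι κ : Type*} [Fintype ι] (X : Matrix ι κ ℝ) :
    (Xᵀ * X).IsHermitian := by
  simpa using isHermitian_conjTranspose_mul_self X

lemma Matrix.IsHermitian.map_eigenvalues_eq_of_eq_conj {κ : Type*} [Fintype κ] [DecidableEq κ]
    {A V : Matrix κ κ ℝ} (hA : A.IsHermitian) (hV : Vᵀ * V = 1) {d : κ → ℝ}
    (h : A = V * diagonal d * Vᵀ) :
    Finset.univ.val.map hA.eigenvalues = Finset.univ.val.map d := by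
  have hchar : A.charpoly = (diagonal d).charpoly := by
    rw [h, Matrix.mul_assoc, charpoly_mul_comm, Matrix.mul_assoc, hV, Matrix.mul_one]
  have hroots := hA.roots_charpoly_eq_eigenvalues
  rw [hchar, charpoly_diagonal, Polynomial.roots_prod _ _
    (Finset.prod_ne_zero_iff.mpr fun i _ => Polynomial.X_sub_C_ne_zero _)] at hroots
  simpa using hroots.symm

lemma sum_range_sval (X : Matrix (Fin m) (Fin n) ℝ) :
    ∑ i ∈ Finset.range n, sval X i =
      ∑ j, √((isHermitian_transpose_mul_self X).eigenvalues j) := by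
  rw [← Fin.sum_univ_eq_sum_range, ← Equiv.sum_comp (Tuple.sort fun j =>
    -(isHermitian_transpose_mul_self X).eigenvalues j)
    (fun j => √((isHermitian_transpose_mul_self X).eigenvalues j))]
  simp [sval]

lemma sval_eq_zero_of_le (X : Matrix (Fin m) (Fin n) ℝ) {i : ℕ} (hmi : m ≤ i) : sval X i = 0 := by
  unfold sval
  split_ifs with hin
  -- The eigenvalues are sorted decreasingly, so a nonzero one at position `i` gives `i + 1`
  -- nonzero eigenvalues of `Xᵀ * X`, whose rank is at most `m`.
  · set e := (isHermitian_transpose_mul_self X).eigenvalues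
    set σ := Tuple.sort fun j => -e j
    suffices h : e (σ ⟨i, hin⟩) = 0 by simp [e, σ, h]
    by_contra hne
    have hpos : 0 < e (σ ⟨i, hin⟩) :=
      lt_of_le_of_ne ((posSemidef_conjTranspose_mul_self X).eigenvalues_nonneg _) (Ne.symm hne)
    have hcard : i + 1 ≤ (Xᵀ * X).rank := by
      rw [(isHermitian_transpose_mul_self X).rank_eq_card_non_zero_eigs, Fintype.card_subtype]
      calc i + 1 = (Finset.Iic (⟨i, hin⟩ : Fin n)).card := (Fin.card_Iic (⟨i, hin⟩ : Fin n)).symm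
        _ ≤ _ := Finset.card_le_card_of_injOn σ (fun k hk => ?_) σ.injective.injOn
      have hsorted := Tuple.monotone_sort (fun j => -e j) (Finset.mem_Iic.mp hk)
      simp only [Finset.coe_filter, Finset.mem_univ, true_and, Set.mem_ofPred_eq]
      exact (hpos.trans_le (neg_le_neg_iff.mp hsorted)).ne'
    have := (rank_transpose_mul_self X).trans_le X.rank_le_height
    omega
  · rfl

lemma nuclearNorm_eq_sum_sqrt_eigenvalues (X : Matrix (Fin m) (Fin n) ℝ) :
    nuclearNorm X = ∑ j, √((isHermitian_transpose_mul_self X).eigenvalues j) := by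
  rw [← sum_range_sval, nuclearNorm]
  refine Finset.sum_subset (Finset.range_subset_range.mpr (min_le_right m n)) fun i hi hni => ?_
  simp only [Finset.mem_range] at hi hni
  exact sval_eq_zero_of_le X (by omega)

lemma nuclearNorm_eq_sum_of_transpose_mul_self_eq (X : Matrix (Fin m) (Fin n) ℝ)
    {V : Matrix (Fin n) (Fin n) ℝ} (hV : Vᵀ * V = 1) {s : Fin n → ℝ} (hs : 0 ≤ s)
    (hX : Xᵀ * X = V * diagonal (s * s) * Vᵀ) :
    nuclearNorm X = ∑ j, s j := by
  have hmap := (isHermitian_transpose_mul_self X).map_eigenvalues_eq_of_eq_conj hV hX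
  calc nuclearNorm X
      = ((Finset.univ.val.map (isHermitian_transpose_mul_self X).eigenvalues).map (√·)).sum := by
        rw [nuclearNorm_eq_sum_sqrt_eigenvalues, Multiset.map_map, Finset.sum_map_val]; rfl
    _ = ∑ j, s j := by
        rw [hmap, Multiset.map_map, Finset.sum_map_val]
        exact Finset.sum_congr rfl fun j _ => Real.sqrt_mul_self (hs j)

lemma Matrix.IsHermitian.eigenvectorBasis_dotProduct_self {κ : Type*} [Fintype κ] [DecidableEq κ]
    {A : Matrix κ κ ℝ} (hA : A.IsHermitian) (j : κ) :
    ⇑(hA.eigenvectorBasis j) ⬝ᵥ ⇑(hA.eigenvectorBasis j) = 1 := by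
  have h := real_inner_self_eq_norm_sq (hA.eigenvectorBasis j)
  rwa [hA.eigenvectorBasis.orthonormal.1 j, EuclideanSpace.inner_eq_star_dotProduct, star_trivial,
    one_pow] at h

lemma mulVec_eigenvectorBasis_dotProduct_self {ι κ : Type*} [Fintype ι] [Fintype κ] [DecidableEq κ]
    (X : Matrix ι κ ℝ) (j : κ) :
    (X *ᵥ (isHermitian_transpose_mul_self X).eigenvectorBasis j) ⬝ᵥ
      (X *ᵥ (isHermitian_transpose_mul_self X).eigenvectorBasis j) =
      (isHermitian_transpose_mul_self X).eigenvalues j := by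
  rw [mulVec_dotProduct_mulVec, (isHermitian_transpose_mul_self X).mulVec_eigenvectorBasis,
    dotProduct_smul, Matrix.IsHermitian.eigenvectorBasis_dotProduct_self, smul_eq_mul, mul_one]

end Spectral

section OrthogonalConjugation

variable {m n : ℕ} {U : Matrix (Fin m) (Fin m) ℝ} {V : Matrix (Fin n) (Fin n) ℝ}

lemma trace_transpose_mul_orth_conj (hU : Uᵀ * U = 1) (hV : Vᵀ * V = 1)
    (A B : Matrix (Fin m) (Fin n) ℝ) :
    ((U * A * Vᵀ)ᵀ * (U * B * Vᵀ)).trace = (Aᵀ * B).trace := by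
  simp only [transpose_mul, transpose_transpose, Matrix.mul_assoc]
  rw [← Matrix.mul_assoc Uᵀ, hU, Matrix.one_mul, trace_mul_comm, Matrix.mul_assoc,
    ← Matrix.mul_assoc, ← Matrix.mul_assoc, Matrix.mul_assoc _ Vᵀ, hV, Matrix.mul_one]

lemma transpose_mul_self_orth_conj (hU : Uᵀ * U = 1) (S : Matrix (Fin m) (Fin n) ℝ) :
    (U * S * Vᵀ)ᵀ * (U * S * Vᵀ) = V * (Sᵀ * S) * Vᵀ := by
  simp only [transpose_mul, transpose_transpose, Matrix.mul_assoc]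
  rw [← Matrix.mul_assoc Uᵀ, hU, Matrix.one_mul]

lemma nuclearNorm_orth_conj_rectDiag (hU : Uᵀ * U = 1) (hV : Vᵀ * V = 1)
    {S : Matrix (Fin m) (Fin n) ℝ} (hS : IsRectDiag S) (hS₀ : 0 ≤ rectDiag S) :
    nuclearNorm (U * S * Vᵀ) = ∑ j, rectDiag S j :=
  nuclearNorm_eq_sum_of_transpose_mul_self_eq _ hV hS₀ <| by
    rw [transpose_mul_self_orth_conj hU, hS.transpose_mul hS]

lemma mulVec_dotProduct_self_orth_conj_rectDiag_le (hU : Uᵀ * U = 1) (hV : V * Vᵀ = 1)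
    {S : Matrix (Fin m) (Fin n) ℝ} (hS : IsRectDiag S) {τ : ℝ} (hSτ : ∀ j, |rectDiag S j| ≤ τ)
    (v : Fin n → ℝ) :
    ((U * S * Vᵀ) *ᵥ v) ⬝ᵥ ((U * S * Vᵀ) *ᵥ v) ≤ τ ^ 2 * (v ⬝ᵥ v) := by
  have hw : (Vᵀ *ᵥ v) ⬝ᵥ (Vᵀ *ᵥ v) = v ⬝ᵥ v := by
    rw [mulVec_dotProduct_mulVec, transpose_transpose, hV, one_mulVec]
  calc ((U * S * Vᵀ) *ᵥ v) ⬝ᵥ ((U * S * Vᵀ) *ᵥ v)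
      = (Vᵀ *ᵥ v) ⬝ᵥ (diagonal (rectDiag S * rectDiag S) *ᵥ (Vᵀ *ᵥ v)) := by
        rw [mulVec_mulVec, mulVec_dotProduct_mulVec, mulVec_dotProduct_mulVec,
          transpose_mul_self_orth_conj hU, hS.transpose_mul hS, transpose_transpose,
          Matrix.mul_assoc]
    _ = ∑ j, |rectDiag S j| ^ 2 * ((Vᵀ *ᵥ v) j * (Vᵀ *ᵥ v) j) := by
        simp only [dotProduct, mulVec_diagonal, Pi.mul_apply, sq_abs]
        exact Finset.sum_congr rfl fun j _ => by ring
    _ ≤ ∑ j, τ ^ 2 * ((Vᵀ *ᵥ v) j * (Vᵀ *ᵥ v) j) := Finset.sum_le_sum fun j _ =>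
        mul_le_mul_of_nonneg_right (pow_le_pow_left₀ (abs_nonneg _) (hSτ j) 2) (mul_self_nonneg _)
    _ = τ ^ 2 * (v ⬝ᵥ v) := by rw [← hw, dotProduct, Finset.mul_sum]

end OrthogonalConjugation

theorem trace_transpose_mul_le_mul_nuclearNorm {m n : ℕ} {G : Matrix (Fin m) (Fin n) ℝ} {τ : ℝ}
    (hτ : 0 ≤ τ)
    (hG : ∀ v, (G *ᵥ v) ⬝ᵥ (G *ᵥ v) ≤ τ ^ 2 * (v ⬝ᵥ v)) (X : Matrix (Fin m) (Fin n) ℝ) :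
    (Gᵀ * X).trace ≤ τ * nuclearNorm X := by
  set hX := isHermitian_transpose_mul_self X
  set b : Fin n → Fin n → ℝ := fun j => hX.eigenvectorBasis j
  have hterm : ∀ j, (G *ᵥ b j) ⬝ᵥ (X *ᵥ b j) ≤ τ * √(hX.eigenvalues j) := fun j => by
    have hμ : 0 ≤ hX.eigenvalues j := (posSemidef_conjTranspose_mul_self X).eigenvalues_nonneg j
    refine le_of_sq_le_sq ?_ (by positivity)
    calc ((G *ᵥ b j) ⬝ᵥ (X *ᵥ b j)) ^ 2
        ≤ ((G *ᵥ b j) ⬝ᵥ (G *ᵥ b j)) * ((X *ᵥ b j) ⬝ᵥ (X *ᵥ b j)) :=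
          dotProduct_sq_le_dotProduct_self_mul _ _
      _ ≤ τ ^ 2 * hX.eigenvalues j := by
          rw [mulVec_eigenvectorBasis_dotProduct_self]
          refine mul_le_mul_of_nonneg_right ?_ hμ
          simpa [b, hX.eigenvectorBasis_dotProduct_self] using hG (b j)
      _ = (τ * √(hX.eigenvalues j)) ^ 2 := by rw [mul_pow, Real.sq_sqrt hμ]
  have hW : (hX.eigenvectorUnitary : Matrix (Fin n) (Fin n) ℝ) * (hX.eigenvectorUnitary)ᵀ = 1 := by
    simpa [star_eq_conjTranspose] using mem_unitaryGroup_iff.mp hX.eigenvectorUnitary.2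
  calc (Gᵀ * X).trace = ∑ j, b j ⬝ᵥ ((Gᵀ * X) *ᵥ b j) := trace_eq_sum_dotProduct_mulVec _ _ hW
    _ = ∑ j, (G *ᵥ b j) ⬝ᵥ (X *ᵥ b j) := by simp only [mulVec_dotProduct_mulVec]
    _ ≤ ∑ j, τ * √(hX.eigenvalues j) := Finset.sum_le_sum fun j _ => hterm j
    _ = τ * nuclearNorm X := by rw [nuclearNorm_eq_sum_sqrt_eigenvalues, Finset.mul_sum]

section Thresholding

variable {m n : ℕ} {S : Matrix (Fin m) (Fin n) ℝ} {τ : ℝ}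

lemma rectDiag_nonneg (hS : ∀ i j, 0 ≤ S i j) : 0 ≤ rectDiag S := fun j => by
  unfold rectDiag
  split_ifs
  exacts [hS _ _, le_rfl]

lemma IsRectDiag.threshold (hS : IsRectDiag S) :
    IsRectDiag (of fun (i : Fin m) (j : Fin n) =>
      if (i : ℕ) = (j : ℕ) then max (S i j - τ) 0 else S i j) :=
  fun i j hij => by simp [hij, hS i j hij]

lemma rectDiag_threshold (hτ : 0 ≤ τ) :
    rectDiag (of fun (i : Fin m) (j : Fin n) =>
      if (i : ℕ) = (j : ℕ) then max (S i j - τ) 0 else S i j) =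
      fun j => max (rectDiag S j - τ) 0 := by
  ext j
  simp only [rectDiag, of_apply]
  split_ifs <;> simp [hτ]

lemma abs_sub_max_sub_zero_le {s : ℝ} (hs : 0 ≤ s) (hτ : 0 ≤ τ) : |s - max (s - τ) 0| ≤ τ := by
  rcases le_total s τ with h | h
  · rw [max_eq_right (by linarith), sub_zero, abs_of_nonneg hs]
    exact h
  · rw [max_eq_left (by linarith), sub_sub_cancel, abs_of_nonneg hτ]

lemma sub_max_sub_zero_mul_max (s : ℝ) :
    (s - max (s - τ) 0) * max (s - τ) 0 = τ * max (s - τ) 0 := by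
  rcases le_total s τ with h | h
  · rw [max_eq_right (by linarith)]
    ring
  · rw [max_eq_left (by linarith)]
    ring

end Thresholding

/-- For positively homogeneous `f`, the hypotheses say that `Y - D` is a subgradient of `f`
at `D`, i.e. the optimality condition of the proximal problem. -/
theorem add_half_frobSq_sub_le_of_subgradient {m n : ℕ} {f : Matrix (Fin m) (Fin n) ℝ → ℝ}
    {Y D X : Matrix (Fin m) (Fin n) ℝ} (hD : ((Y - D)ᵀ * D).trace = f D)
    (hX : ((Y - D)ᵀ * X).trace ≤ f X) :
    f D + (1 / 2) * frobSq (D - Y) ≤ f X + (1 / 2) * frobSq (X - Y) := by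
  have hcross : ((X - D)ᵀ * (D - Y)).trace = ((Y - D)ᵀ * D).trace - ((Y - D)ᵀ * X).trace := by
    rw [trace_transpose_mul_comm, ← neg_sub Y D, transpose_neg, Matrix.neg_mul, trace_neg,
      Matrix.mul_sub, trace_sub]
    ring
  have hsplit := frobSq_add (X - D) (D - Y)
  rw [sub_add_sub_cancel, hcross] at hsplit
  linarith [frobSq_nonneg (X - D)]

/-- Singular value thresholding solves the nuclear norm proximal problem: if `Y = U·Σ·Vᵀ`
is an SVD (`U`, `V` orthogonal, `Σ` diagonal with nonnegative entries) and
`D_τ(Y) = U·Σ_τ·Vᵀ`, where `Σ_τ` replaces each diagonal entry `σ` of `Σ` with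
`max(σ − τ, 0)`, then for every `X`:
`τ‖D_τ(Y)‖_* + ½‖D_τ(Y) − Y‖_F² ≤ τ‖X‖_* + ½‖X − Y‖_F²`. -/
theorem svt_solves_nuclearNorm_prox {m n : ℕ} (τ : ℝ) (hτ : 0 < τ)
    (Y D : Matrix (Fin m) (Fin n) ℝ)
    (U : Matrix (Fin m) (Fin m) ℝ) (Sig : Matrix (Fin m) (Fin n) ℝ)
    (V : Matrix (Fin n) (Fin n) ℝ)
    (hU : U * Uᵀ = 1 ∧ Uᵀ * U = 1) (hV : V * Vᵀ = 1 ∧ Vᵀ * V = 1)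
    (hSigDiag : ∀ (i : Fin m) (j : Fin n), (i : ℕ) ≠ (j : ℕ) → Sig i j = 0)
    (hSigNonneg : ∀ (i : Fin m) (j : Fin n), 0 ≤ Sig i j)
    (hY : Y = U * Sig * Vᵀ)
    (hD : D = U * Matrix.of
      (fun (i : Fin m) (j : Fin n) =>
        if (i : ℕ) = (j : ℕ) then max (Sig i j - τ) 0 else Sig i j) * Vᵀ) :
    ∀ X : Matrix (Fin m) (Fin n) ℝ,
      τ * nuclearNorm D + (1 / 2) * frobSq (D - Y) ≤
        τ * nuclearNorm X + (1 / 2) * frobSq (X - Y) := by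
  intro X
  set T := Matrix.of fun (i : Fin m) (j : Fin n) =>
    if (i : ℕ) = (j : ℕ) then max (Sig i j - τ) 0 else Sig i j
  have hSig : IsRectDiag Sig := hSigDiag
  have hT : IsRectDiag T := hSig.threshold
  have hTdiag : rectDiag T = fun j => max (rectDiag Sig j - τ) 0 := rectDiag_threshold hτ.le
  have hG : Y - D = U * (Sig - T) * Vᵀ := by rw [hY, hD, Matrix.mul_sub, Matrix.sub_mul]
  refine add_half_frobSq_sub_le_of_subgradient (f := fun X => τ * nuclearNorm X) ?_ ?_
  · rw [hG, hD, nuclearNorm_orth_conj_rectDiag hU.2 hV.2 hT (by simp [hTdiag, Pi.le_def]),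
      trace_transpose_mul_orth_conj hU.2 hV.2, (hSig.sub hT).transpose_mul hT, trace_diagonal,
      Finset.mul_sum, rectDiag_sub, hTdiag]
    exact Finset.sum_congr rfl fun j _ => sub_max_sub_zero_mul_max _
  · rw [hG]
    refine trace_transpose_mul_le_mul_nuclearNorm hτ.le
      (mulVec_dotProduct_self_orth_conj_rectDiag_le hU.2 hV.1 (hSig.sub hT) fun j => ?_) X
    rw [rectDiag_sub, hTdiag]
    exact abs_sub_max_sub_zero_le (rectDiag_nonneg hSigNonneg j) hτ.le
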